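/- With γ_k = max_{0 ≤ r ≤ k+1} (log(k+2+r(r+3)/2))/(k+r+1) and β_k the largest real root of x^{k+1}-x^k-1, for every integer k ≥ 2 one has γ_{k-1} < 2 log β_k. -/

import Mathlib

/-!
From `β ^ (k + 1) = β ^ k + 1` one gets `β ^ (k + r + 1) = β ^ (k + r) + β ^ r ≥ β ^ (k + r) + 1`,
hence `β ^ (k + r) ≥ β ^ k + r`. Squaring, and using this also for `r = k`,
`β ^ (2 (k + r)) ≥ β ^ k + k + 2 r β ^ k + r ^ 2 > k + 1 + r (r + 3) / 2`, so every term
`log (k + 1 + r (r + 3) / 2) / (k + r)` of the finite maximum is below `2 log β`.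
-/

open Real

section Root

variable {β : ℝ} {k : ℕ}

lemma pow_add_natCast_le_pow_add (hβ : 1 ≤ β) (hroot : β ^ (k + 1) = β ^ k + 1) (r : ℕ) :
    β ^ k + r ≤ β ^ (k + r) := by
  induction r with
  | zero => simp
  | succ n ih =>
    have hstep : β ^ (k + (n + 1)) = β ^ (k + n) + β ^ n := by
      rw [show k + (n + 1) = n + (k + 1) by omega, pow_add, hroot, mul_add, mul_one, ← pow_add,
        add_comm n k]
    have hpow : 1 ≤ β ^ n := one_le_pow₀ hβ
    push_cast
    linarith

lemma natCast_lt_pow_two_mul (hk : 0 < k) (hβ : 1 < β) (hroot : β ^ (k + 1) = β ^ k + 1)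
    (r : ℕ) : ((k + 1 + r * (r + 3) / 2 : ℕ) : ℝ) < β ^ (2 * (k + r)) := by
  have hfloor : ((k + 1 + r * (r + 3) / 2 : ℕ) : ℝ) ≤ k + 1 + r * (r + 3) / 2 := by
    have := Nat.cast_div_le (α := ℝ) (m := r * (r + 3)) (n := 2)
    push_cast at this ⊢
    linarith
  have hr : β ^ k + r ≤ β ^ (k + r) := pow_add_natCast_le_pow_add hβ.le hroot r
  have hk' : β ^ k + k ≤ (β ^ k) ^ 2 := by
    simpa [← pow_mul, mul_two] using pow_add_natCast_le_pow_add hβ.le hroot k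
  have hβk : 1 < β ^ k := one_lt_pow₀ hβ hk.ne'
  have hsq : (β ^ k + r) ^ 2 ≤ β ^ (2 * (k + r)) := by
    rw [mul_comm, pow_mul]
    exact pow_le_pow_left₀ (by positivity) hr 2
  have hr0 : (0 : ℝ) ≤ r := r.cast_nonneg
  nlinarith [mul_le_mul_of_nonneg_left hβk.le hr0]

lemma log_div_lt_two_mul_log (hk : 0 < k) (hβ : 1 < β) (hroot : β ^ (k + 1) = β ^ k + 1)
    (r : ℕ) :
    log ((k + 1 + r * (r + 3) / 2 : ℕ) : ℝ) / ((k + r : ℕ) : ℝ) < 2 * log β := by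
  have hpos : (0 : ℝ) < ((k + r : ℕ) : ℝ) := by exact_mod_cast (by omega : 0 < k + r)
  have hlog : log ((k + 1 + r * (r + 3) / 2 : ℕ) : ℝ) < log (β ^ (2 * (k + r))) :=
    log_lt_log (by exact_mod_cast (by omega : 0 < k + 1 + r * (r + 3) / 2))
      (natCast_lt_pow_two_mul hk hβ hroot r)
  rw [div_lt_iff₀ hpos]
  rw [log_pow] at hlog
  push_cast at hlog ⊢
  linarith

end Root

lemma csSup_lt_of_forall_le_lt {f : ℕ → ℝ} {k : ℕ} {c : ℝ} (h : ∀ r ≤ k, f r < c) :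
    sSup {x : ℝ | ∃ r : ℕ, r ≤ k ∧ x = f r} < c := by
  have hfin : {x : ℝ | ∃ r : ℕ, r ≤ k ∧ x = f r}.Finite :=
    ((Set.finite_Iic k).image f).subset fun _ ⟨r, hr, hx⟩ => ⟨r, hr, hx.symm⟩
  rw [hfin.csSup_lt_iff ⟨f 0, 0, k.zero_le, rfl⟩]
  rintro _ ⟨r, hr, rfl⟩
  exact h r hr

theorem gamma_lt_two_log_beta_general (k : ℕ) (hk : 2 ≤ k) (β : ℝ) (hβ : 1 < β)
    (hroot : β ^ (k + 1) = β ^ k + 1) :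
    sSup {x : ℝ | ∃ r : ℕ, r ≤ k ∧
        x = Real.log ((k + 1 + r * (r + 3) / 2 : ℕ) : ℝ) / ((k + r : ℕ) : ℝ)}
      < 2 * Real.log β :=
  csSup_lt_of_forall_le_lt fun r _ => log_div_lt_two_mul_log (by omega) hβ hroot r

/-- For `k ≥ 2`, with `β_k` the largest real root of `x^(k+1) - x^k - 1` and
`γ_{k-1} = max_{0 ≤ r ≤ k} (log(k+1+r(r+3)/2))/(k+r)`, one has `γ_{k-1} < 2 log β_k`. -/
theorem gamma_lt_two_log_beta (k : ℕ) (hk : 2 ≤ k) (β : ℝ) (hβ : 1 < β)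
    (hroot : β ^ (k + 1) = β ^ k + 1)
    (hmax : ∀ x : ℝ, x ^ (k + 1) = x ^ k + 1 → x ≤ β) :
    sSup {x : ℝ | ∃ r : ℕ, r ≤ k ∧
        x = Real.log ((k + 1 + r * (r + 3) / 2 : ℕ) : ℝ) / ((k + r : ℕ) : ℝ)}
      < 2 * Real.log β :=
  gamma_lt_two_log_beta_general k hk β hβ hroot
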